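/- arXiv:1912.06230 — 4 statements merged into one kernel-verified Lean document; each statement's English description precedes it below -/
import Mathlib

section
/- Let G be a commutative multiplicative group, K a G-graded field, and g ∈ G. Then every nonzero homogeneous ideal I of the graded polynomial ring K[g⁻¹T] is principal, and it has a unique monic homogeneous generator. -/
universe u v

/-- A `G`-graded commutative ring structure on `A`: graded pieces `deg g`,
multiplicativity of the grading, and an internal direct sum decomposition
recorded by the homogeneous-component function `comp`. -/
structure GradedStr (G : Type u) [CommGroup G] (A : Type v) [CommRing A] where
  deg : G → AddSubgroup A
  one_mem : (1 : A) ∈ deg 1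
  mul_mem : ∀ {g h : G} {a b : A}, a ∈ deg g → b ∈ deg h → a * b ∈ deg (g * h)
  comp : A → G → A
  comp_mem : ∀ a g, comp a g ∈ deg g
  comp_add : ∀ a b g, comp (a + b) g = comp a g + comp b g
  comp_of_mem : ∀ {a : A} {g : G}, a ∈ deg g → comp a g = a
  comp_of_mem_ne : ∀ {a : A} {g g' : G}, a ∈ deg g → g' ≠ g → comp a g' = 0
  finite_support : ∀ a : A, (Function.support (comp a)).Finite
  sum_comp : ∀ a : A, ∑ᶠ g, comp a g = a

namespace GradedStr

variable {G : Type u} [CommGroup G] {A : Type v} [CommRing A]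

/-- `a` is homogeneous: it lies in some graded piece. -/
def IsHomog (𝒜 : GradedStr G A) (a : A) : Prop := ∃ g, a ∈ 𝒜.deg g

/-- A `G`-graded field: a nonzero graded ring in which every nonzero homogeneous
element is invertible. -/
def IsGradedField (𝒜 : GradedStr G A) : Prop :=
  Nontrivial A ∧ ∀ a : A, 𝒜.IsHomog a → a ≠ 0 → IsUnit a

/-- A graded subring: a subring stable under taking homogeneous components. -/
def IsGradedSubring (𝒜 : GradedStr G A) (S : Subring A) : Prop :=
  ∀ x ∈ S, ∀ g, 𝒜.comp x g ∈ S

/-- A graded subfield of a graded field: a graded subring containing the inverses of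
its nonzero homogeneous elements. -/
def IsGradedSubfield (𝒜 : GradedStr G A) (S : Subring A) : Prop :=
  𝒜.IsGradedSubring S ∧ ∀ x ∈ S, 𝒜.IsHomog x → x ≠ 0 → Ring.inverse x ∈ S

/-- The additive subgroup of homogeneous polynomials of grading `h` in `K[g₀⁻¹ T]`,
the polynomial ring in which `T` is declared homogeneous of grading `g₀`: the
coefficient of `T^n` must be homogeneous of grading `h * g₀⁻ⁿ`. -/
def polyDeg (𝒜 : GradedStr G A) (g₀ h : G) : AddSubgroup (Polynomial A) where
  carrier := {p | ∀ n : ℕ, p.coeff n ∈ 𝒜.deg (h * (g₀ ^ n)⁻¹)}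
  zero_mem' := by intro n; simpa using (𝒜.deg (h * (g₀ ^ n)⁻¹)).zero_mem
  add_mem' := by
    intro p q hp hq n
    rw [Polynomial.coeff_add]
    exact (𝒜.deg _).add_mem (hp n) (hq n)
  neg_mem' := by
    intro p hp n
    rw [Polynomial.coeff_neg]
    exact (𝒜.deg _).neg_mem (hp n)

/-- A homogeneous polynomial in `K[g₀⁻¹T]`. -/
def IsHomogPoly (𝒜 : GradedStr G A) (g₀ : G) (p : Polynomial A) : Prop :=
  ∃ h, p ∈ 𝒜.polyDeg g₀ h

/-- The graded fraction field of a graded subring of a graded field, computed inside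
the ambient graded field: the subring generated by `S` together with the inverses of
the nonzero homogeneous elements of `S`. -/
def fracIn (𝒜 : GradedStr G A) (S : Subring A) : Subring A :=
  Subring.closure (↑S ∪ {y : A | ∃ x ∈ S, x ≠ 0 ∧ 𝒜.IsHomog x ∧ y = Ring.inverse x})

end GradedStr

/-- `x` is integral over the subring `S` (satisfies a monic polynomial equation with
coefficients in `S`). -/
def IntegralOver {A : Type v} [CommRing A] (S : Subring A) (x : A) : Prop :=
  ∃ p : Polynomial A, p.Monic ∧ (∀ n, p.coeff n ∈ S) ∧ Polynomial.eval x p = 0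

/-- Algebraic independence of a family of elements over a subring: the evaluation map
from the (multivariate) polynomial ring is injective.  (For homogeneous elements this
is graded algebraic independence, the grading playing no role in injectivity.) -/
def AlgIndepOver {A : Type v} [CommRing A] {ι : Type*} (S : Subring A) (T : ι → A) : Prop :=
  Function.Injective (MvPolynomial.eval₂Hom S.subtype T)

/-- A graded valuation ring of the graded subfield `F` of the ambient graded field:
a graded subring `O ⊆ F` such that every nonzero homogeneous element `f` of `F`
satisfies `f ∈ O` or `f⁻¹ ∈ O`. -/
def IsGVRofSubfield {G : Type u} [CommGroup G] {A : Type v} [CommRing A]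
    (𝒜 : GradedStr G A) (F : Subring A) (O : Subring A) : Prop :=
  O ≤ F ∧ 𝒜.IsGradedSubring O ∧
    ∀ f ∈ F, f ≠ 0 → 𝒜.IsHomog f → f ∈ O ∨ Ring.inverse f ∈ O


/-!
Multiplying by a homogeneous polynomial shifts homogeneous components, and the leading
coefficient of a nonzero homogeneous polynomial is a homogeneous unit, so `I` contains a
monic homogeneous `f` of least degree among its nonzero homogeneous elements. For a
homogeneous `p ∈ I` of grading `h`, the grading-`h` component of `p %ₘ f` equals
`p - f * q'` with `q'` homogeneous; it lies in `I` and has degree below `deg f`, so it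
vanishes and `f ∣ p`. Two monic polynomials dividing each other are equal.
-/

open Polynomial

theorem Polynomial.Monic.eq_of_dvd_of_dvd {R : Type*} [CommRing R] {p q : R[X]}
    (hp : p.Monic) (hq : q.Monic) (hpq : p ∣ q) (hqp : q ∣ p) : p = q := by
  obtain ⟨a, rfl⟩ := hpq
  obtain ⟨b, hb⟩ := hqp
  have hab : a * b = 1 :=
    (hp.isRegular.left (by rw [mul_one, ← mul_assoc, ← hb] : p * (a * b) = p * 1))
  have ha : IsUnit a := IsUnit.of_mul_eq_one b hab
  exact eq_of_monic_of_associated hp hq ⟨ha.unit, rfl⟩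

namespace GradedStr

variable {G : Type u} [CommGroup G] {K : Type v} [CommRing K] (𝒜 : GradedStr G K)

@[simp]
theorem comp_zero (g : G) : 𝒜.comp 0 g = 0 := by
  simpa using 𝒜.comp_add 0 0 g

@[simps]
def compHom (g : G) : K →+ K where
  toFun a := 𝒜.comp a g
  map_zero' := 𝒜.comp_zero g
  map_add' a b := 𝒜.comp_add a b g

theorem comp_mul_of_mem {g : G} {a : K} (ha : a ∈ 𝒜.deg g) (b : K) (h : G) :
    𝒜.comp (a * b) (g * h) = a * 𝒜.comp b h := by
  have hfin : (Function.support fun h' => a * 𝒜.comp b h').Finite :=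
    (𝒜.finite_support b).subset (Function.support_mul_subset_right _ _)
  conv_lhs => rw [← 𝒜.sum_comp b, mul_finsum' _ a (𝒜.finite_support b)]
  change 𝒜.compHom (g * h) _ = _
  rw [(𝒜.compHom (g * h)).map_finsum hfin, finsum_eq_single _ h]
  · exact 𝒜.comp_of_mem (𝒜.mul_mem ha (𝒜.comp_mem b h))
  · intro h' hh'
    exact 𝒜.comp_of_mem_ne (𝒜.mul_mem ha (𝒜.comp_mem b h'))
      fun hg => hh' (mul_left_cancel hg).symm

theorem exists_mem_deg_inv_mul_eq_one {g : G} {a : K} (ha : a ∈ 𝒜.deg g) (hu : IsUnit a) :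
    ∃ b ∈ 𝒜.deg g⁻¹, a * b = 1 := by
  refine ⟨𝒜.comp (Ring.inverse a) g⁻¹, 𝒜.comp_mem _ _, ?_⟩
  rw [← 𝒜.comp_mul_of_mem ha, Ring.mul_inverse_cancel a hu, mul_inv_cancel,
    𝒜.comp_of_mem 𝒜.one_mem]

variable {𝒜} {g₀ : G}

theorem C_mul_mem_polyDeg {k h : G} {u : K} (hu : u ∈ 𝒜.deg k) {p : K[X]}
    (hp : p ∈ 𝒜.polyDeg g₀ h) : C u * p ∈ 𝒜.polyDeg g₀ (k * h) := by
  intro n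
  rw [coeff_C_mul, mul_assoc]
  exact 𝒜.mul_mem hu (hp n)

theorem exists_monic_C_mul_of_mem_polyDeg (hK : 𝒜.IsGradedField) {h : G} {p : K[X]}
    (hp : p ∈ 𝒜.polyDeg g₀ h) (hp0 : p ≠ 0) :
    ∃ u : K, (C u * p).Monic ∧ (C u * p).natDegree = p.natDegree ∧
      𝒜.IsHomogPoly g₀ (C u * p) := by
  have hc : p.leadingCoeff ∈ 𝒜.deg (h * (g₀ ^ p.natDegree)⁻¹) := hp _
  obtain ⟨u, hu, hcu⟩ := 𝒜.exists_mem_deg_inv_mul_eq_one hc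
    (hK.2 _ ⟨_, hc⟩ (leadingCoeff_ne_zero.mpr hp0))
  exact ⟨u, monic_C_mul_of_mul_leadingCoeff_eq_one (by rw [mul_comm, hcu]),
    natDegree_C_mul_eq_of_mul_eq_one hcu, _, C_mul_mem_polyDeg hu hp⟩

variable (𝒜 g₀)

noncomputable def polyComp (p : K[X]) (h : G) : K[X] :=
  ∑ n ∈ p.support, C (𝒜.comp (p.coeff n) (h * (g₀ ^ n)⁻¹)) * X ^ n

theorem coeff_polyComp (p : K[X]) (h : G) (n : ℕ) :
    (𝒜.polyComp g₀ p h).coeff n = 𝒜.comp (p.coeff n) (h * (g₀ ^ n)⁻¹) := by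
  simp only [polyComp, finsetSum_coeff, coeff_C_mul_X_pow]
  rw [Finset.sum_ite_eq p.support n]
  split_ifs with hn
  · rfl
  · rw [notMem_support_iff.mp hn, 𝒜.comp_zero]

theorem polyComp_mem_polyDeg (p : K[X]) (h : G) : 𝒜.polyComp g₀ p h ∈ 𝒜.polyDeg g₀ h := by
  intro n
  rw [coeff_polyComp]
  exact 𝒜.comp_mem _ _

variable {𝒜 g₀}

theorem polyComp_of_mem {p : K[X]} {h : G} (hp : p ∈ 𝒜.polyDeg g₀ h) :
    𝒜.polyComp g₀ p h = p := by
  ext n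
  rw [coeff_polyComp]
  exact 𝒜.comp_of_mem (hp n)

theorem polyComp_sub (p q : K[X]) (h : G) :
    𝒜.polyComp g₀ (p - q) h = 𝒜.polyComp g₀ p h - 𝒜.polyComp g₀ q h := by
  ext n
  simp only [coeff_polyComp, coeff_sub]
  exact map_sub (𝒜.compHom _) _ _

theorem degree_polyComp_le (p : K[X]) (h : G) : (𝒜.polyComp g₀ p h).degree ≤ p.degree := by
  refine (degree_le_iff_coeff_zero _ _).mpr fun n hn => ?_
  rw [coeff_polyComp, coeff_eq_zero_of_degree_lt hn, 𝒜.comp_zero]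

theorem polyComp_mul_of_mem {f : K[X]} {k : G} (hf : f ∈ 𝒜.polyDeg g₀ k) (q : K[X]) (h : G) :
    𝒜.polyComp g₀ (f * q) h = f * 𝒜.polyComp g₀ q (h * k⁻¹) := by
  ext n
  rw [coeff_polyComp, coeff_mul, coeff_mul, ← 𝒜.compHom_apply, map_sum]
  refine Finset.sum_congr rfl fun x hx => ?_
  have hg : h * (g₀ ^ n)⁻¹ = (k * (g₀ ^ x.1)⁻¹) * (h * k⁻¹ * (g₀ ^ x.2)⁻¹) := by
    rw [← Finset.HasAntidiagonal.mem_antidiagonal.mp hx, pow_add, mul_inv]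
    simp only [mul_left_comm, mul_assoc, mul_inv_cancel_left]
  rw [compHom_apply, hg, 𝒜.comp_mul_of_mem (hf x.1), coeff_polyComp]

theorem exists_monic_mem_forall_degree_lt (hK : 𝒜.IsGradedField) {I : Ideal K[X]} {p : K[X]}
    (hpI : p ∈ I) (hp0 : p ≠ 0) (hp : 𝒜.IsHomogPoly g₀ p) :
    ∃ f ∈ I, f.Monic ∧ 𝒜.IsHomogPoly g₀ f ∧
      ∀ q ∈ I, 𝒜.IsHomogPoly g₀ q → q.degree < f.degree → q = 0 := by
  classical
  have hex : ∃ n, ∃ f ∈ I, f.Monic ∧ 𝒜.IsHomogPoly g₀ f ∧ f.natDegree = n := by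
    obtain ⟨h, hph⟩ := hp
    obtain ⟨u, hmon, -, hhom⟩ := exists_monic_C_mul_of_mem_polyDeg hK hph hp0
    exact ⟨_, _, I.mul_mem_left _ hpI, hmon, hhom, rfl⟩
  obtain ⟨f, hfI, hfmon, hfhom, hfdeg⟩ := Nat.find_spec hex
  refine ⟨f, hfI, hfmon, hfhom, fun q hqI ⟨h, hqh⟩ hlt => ?_⟩
  by_contra hq0
  obtain ⟨u, hmon, hdeg, hhom⟩ := exists_monic_C_mul_of_mem_polyDeg hK hqh hq0
  have hlt' : (C u * q).natDegree < Nat.find hex := hdeg ▸ hfdeg ▸ natDegree_lt_natDegree hq0 hlt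
  exact Nat.find_min hex hlt' ⟨_, I.mul_mem_left _ hqI, hmon, hhom, rfl⟩

theorem dvd_of_forall_degree_lt {I : Ideal K[X]} {f : K[X]} {k : G} (hf : f.Monic)
    (hfk : f ∈ 𝒜.polyDeg g₀ k) (hfI : f ∈ I)
    (hmin : ∀ q ∈ I, 𝒜.IsHomogPoly g₀ q → q.degree < f.degree → q = 0)
    {p : K[X]} (hpI : p ∈ I) (hp : 𝒜.IsHomogPoly g₀ p) : f ∣ p := by
  nontriviality K
  obtain ⟨h, hph⟩ := hp
  have hr : p %ₘ f = p - f * (p /ₘ f) := eq_sub_of_add_eq (modByMonic_add_div p f)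
  have hcomp : 𝒜.polyComp g₀ (p %ₘ f) h = p - f * 𝒜.polyComp g₀ (p /ₘ f) (h * k⁻¹) := by
    rw [hr, polyComp_sub, polyComp_of_mem hph, polyComp_mul_of_mem hfk]
  have hzero : 𝒜.polyComp g₀ (p %ₘ f) h = 0 :=
    hmin _ (hcomp ▸ I.sub_mem hpI (I.mul_mem_right _ hfI)) ⟨h, polyComp_mem_polyDeg _ _ _ _⟩
      ((degree_polyComp_le _ _).trans_lt (degree_modByMonic_lt p hf))
  exact ⟨_, sub_eq_zero.mp (hcomp ▸ hzero)⟩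

end GradedStr

/-- Let `G` be a commutative multiplicative group, `K` a `G`-graded
field, and `g₀ ∈ G`.  Every nonzero homogeneous ideal `I` of the graded polynomial
ring `K[g₀⁻¹T]` (an ideal generated by homogeneous elements) is principal, with a
unique monic homogeneous generator. -/
theorem homogeneous_ideal_principal_unique_monic_generator
    {G : Type u} [CommGroup G] {K : Type v} [CommRing K]
    (𝒜 : GradedStr G K) (hK : 𝒜.IsGradedField) (g₀ : G)
    (I : Ideal (Polynomial K))
    (hIhom : ∃ S : Set (Polynomial K),
      (∀ p ∈ S, 𝒜.IsHomogPoly g₀ p) ∧ I = Ideal.span S)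
    (hI0 : I ≠ ⊥) :
    ∃! f : Polynomial K, f.Monic ∧ 𝒜.IsHomogPoly g₀ f ∧ I = Ideal.span {f} := by
  obtain ⟨S, hS, rfl⟩ := hIhom
  obtain ⟨p, hpS, hp0⟩ : ∃ p ∈ S, p ≠ 0 := by simpa [Ideal.span_eq_bot] using hI0
  obtain ⟨f, hfI, hfmon, ⟨k, hfk⟩, hmin⟩ :=
    GradedStr.exists_monic_mem_forall_degree_lt hK (Ideal.subset_span hpS) hp0 (hS p hpS)
  have hspan : Ideal.span S = Ideal.span {f} := by
    refine le_antisymm (Ideal.span_le.mpr fun q hq => ?_) (Ideal.span_le.mpr (by simpa using hfI))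
    exact Ideal.mem_span_singleton.mpr <|
      GradedStr.dvd_of_forall_degree_lt hfmon hfk hfI hmin (Ideal.subset_span hq) (hS q hq)
  refine ⟨f, ⟨hfmon, ⟨k, hfk⟩, hspan⟩, fun f' ⟨hf'mon, _, hspan'⟩ => ?_⟩
  rw [hspan] at hspan'
  exact hf'mon.eq_of_dvd_of_dvd hfmon (Ideal.span_singleton_le_span_singleton.mp hspan'.le)
    (Ideal.span_singleton_le_span_singleton.mp hspan'.ge)
end

section
/- Let L/K be an extension of G-graded fields, A a graded subring of K that is integrally closed in K in the graded sense, and x ∈ L^× a homogeneous element of grading g that is integral over A. Then the minimal homogeneous polynomial f_x(T) of x over K has all its coefficients in A, i.e. f_x(T) ∈ A[g⁻¹T] ⊆ K[g⁻¹T]. -/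
universe u v

open Polynomial

section KroneckerAux

variable {R : Type u} {K : Type v} [CommRing R] [CommRing K]

/-- Push integrality forward along a ring hom. -/
lemma isIntegralElem_comp_map (i : R →+* K) {K' : Type v} [CommRing K'] (φ : K →+* K')
    {z : K} (h : i.IsIntegralElem z) : (φ.comp i).IsIntegralElem (φ z) := by
  obtain ⟨p, hm, hp⟩ := h
  exact ⟨p, hm, by rw [← Polynomial.hom_eval₂, hp, map_zero]⟩

/-- Pull integrality back along an injective ring hom. -/
lemma isIntegralElem_of_comp_inj (i : R →+* K) {K' : Type v} [CommRing K'] (φ : K →+* K')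
    (hφ : Function.Injective φ) {z : K} (h : (φ.comp i).IsIntegralElem (φ z)) :
    i.IsIntegralElem z := by
  obtain ⟨p, hm, hp⟩ := h
  refine ⟨p, hm, hφ ?_⟩
  rw [Polynomial.hom_eval₂, hp, map_zero]

/-- A root of a monic polynomial all of whose coefficients are integral is integral. -/
lemma isIntegralElem_of_root_of_coeff (i : R →+* K) (P : K[X]) (hP : P.Monic)
    (hco : ∀ k, i.IsIntegralElem (P.coeff k)) {t : K} (ht : P.eval t = 0) :
    i.IsIntegralElem t := by
  letI : Algebra R K := i.toAlgebra
  rcases subsingleton_or_nontrivial K with hT | hT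
  · exact ⟨X, monic_X, Subsingleton.elim _ _⟩
  show IsIntegral R t
  have hlift : P ∈ Polynomial.lifts (algebraMap (integralClosure R K) K) := by
    rw [Polynomial.lifts_iff_coeff_lifts]
    exact fun k => ⟨⟨P.coeff k, hco k⟩, rfl⟩
  obtain ⟨P', hmap, _, hmonic⟩ := Polynomial.lifts_and_degree_eq_and_monic hlift hP
  have hC : IsIntegral (integralClosure R K) t :=
    ⟨P', hmonic, by rw [eval₂_eq_eval_map, hmap, ht]⟩
  exact isIntegral_trans (A := integralClosure R K) t hC

/-- **Kronecker's lemma**: if `f * q` is monic with coefficients integral over `R`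
and `f, q` are monic, then the coefficients of `f` are integral over `R`. -/
lemma kronecker_coeff_integral :
    ∀ (n : ℕ) {K : Type v} [CommRing K] (i : R →+* K) (f q : K[X]),
      f.Monic → q.Monic → f.natDegree = n →
      (∀ k, i.IsIntegralElem ((f * q).coeff k)) → ∀ k, i.IsIntegralElem (f.coeff k) := by
  intro n
  induction n with
  | zero =>
    intro K _ i f q hf _ hdeg _ k
    have hf1 : f = 1 := hf.natDegree_eq_zero.mp hdeg
    subst hf1
    rcases Nat.eq_zero_or_pos k with rfl | hk
    · simpa using i.isIntegralElem_one
    · rw [coeff_one, if_neg (by omega)]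
      exact i.isIntegralElem_zero
  | succ n IH =>
    intro K _ i f q hf hq hdeg hco
    have hfne : f ≠ 0 := fun h => by simp [h] at hdeg
    have hKnt : Nontrivial K := by
      by_contra h
      rw [not_nontrivial_iff_subsingleton] at h
      exact hfne (Subsingleton.elim _ _)
    have hdegpos : 0 < f.degree := natDegree_pos_iff_degree_pos.mp (by omega)
    set K' := AdjoinRoot f with hK'
    set φ : K →+* K' := AdjoinRoot.of f with hφ
    set t : K' := AdjoinRoot.root f with htdef
    have hinj : Function.Injective φ := by
      intro a b hab
      have h2 : AdjoinRoot.modByMonicHom hf (φ a) = AdjoinRoot.modByMonicHom hf (φ b) := by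
        rw [hab]
      have ha : AdjoinRoot.modByMonicHom hf (φ a) = C a := by
        show AdjoinRoot.modByMonicHom hf (AdjoinRoot.mk f (C a)) = C a
        rw [AdjoinRoot.modByMonicHom_mk, (modByMonic_eq_self_iff hf).mpr
          (lt_of_le_of_lt (degree_C_le) hdegpos)]
      have hb : AdjoinRoot.modByMonicHom hf (φ b) = C b := by
        show AdjoinRoot.modByMonicHom hf (AdjoinRoot.mk f (C b)) = C b
        rw [AdjoinRoot.modByMonicHom_mk, (modByMonic_eq_self_iff hf).mpr
          (lt_of_le_of_lt (degree_C_le) hdegpos)]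
      exact C_injective (by rw [← ha, ← hb, h2])
    have hK'nt : Nontrivial K' := hinj.nontrivial
    have hFt : (f.map φ).eval t = 0 := by
      rw [eval_map]; exact AdjoinRoot.eval₂_root f
    set f₁ : K'[X] := (f.map φ) /ₘ (X - C t) with hf₁def
    have heq : (X - C t) * f₁ = f.map φ := mul_divByMonic_eq_iff_isRoot.mpr hFt
    have hf₁ : f₁.Monic := (monic_X_sub_C t).of_mul_monic_left (heq ▸ hf.map φ)
    have hdeg₁ : f₁.natDegree = n := by
      have h1 : ((X - C t) * f₁).natDegree = 1 + f₁.natDegree := by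
        rw [(monic_X_sub_C t).natDegree_mul hf₁, natDegree_X_sub_C]
      rw [heq, hf.natDegree_map] at h1
      omega
    set j : R →+* K' := φ.comp i with hjdef
    have hPco : ∀ k, j.IsIntegralElem (((f * q).map φ).coeff k) := by
      intro k
      rw [coeff_map]
      exact isIntegralElem_comp_map i φ (hco k)
    have ht : j.IsIntegralElem t := by
      refine isIntegralElem_of_root_of_coeff j ((f * q).map φ) ((hf.mul hq).map φ) hPco ?_
      rw [Polynomial.map_mul, eval_mul, hFt, zero_mul]
    have hdiv : (f * q).map φ /ₘ (X - C t) = f₁ * q.map φ := by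
      rw [Polynomial.map_mul, ← heq, mul_assoc]
      exact mul_divByMonic_cancel_left _ (monic_X_sub_C t)
    have hco₁ : ∀ k, j.IsIntegralElem ((f₁ * q.map φ).coeff k) := by
      intro k
      rw [← hdiv, coeff_divByMonic_X_sub_C]
      set G : Set K' := {t} ∪ Set.range (fun m => ((f * q).map φ).coeff m) with hG
      have hGint : ∀ y ∈ G, j.IsIntegralElem y := by
        rintro y (rfl | ⟨m, rfl⟩)
        · exact ht
        · exact hPco m
      apply IsIntegral.of_mem_closure'' G hGint
      refine sum_mem ?_
      intro m _
      have h1 : t ∈ Subring.closure G := Subring.subset_closure (Or.inl rfl)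
      have h2 : ((f * q).map φ).coeff m ∈ Subring.closure G :=
        Subring.subset_closure (Or.inr ⟨m, rfl⟩)
      exact mul_mem (pow_mem h1 _) h2
    have hf₁co : ∀ k, j.IsIntegralElem (f₁.coeff k) :=
      IH j f₁ (q.map φ) hf₁ (hq.map φ) hdeg₁ hco₁
    intro k
    refine isIntegralElem_of_comp_inj i φ hinj ?_
    rw [← coeff_map (p := f), ← heq]
    set G' : Set K' := {t} ∪ Set.range f₁.coeff with hG'
    have hG'int : ∀ y ∈ G', j.IsIntegralElem y := by
      rintro y (rfl | ⟨m, rfl⟩)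
      exacts [ht, hf₁co m]
    apply IsIntegral.of_mem_closure'' G' hG'int
    have hexp : ((X - C t) * f₁).coeff k = (X * f₁).coeff k - t * f₁.coeff k := by
      rw [sub_mul, coeff_sub, coeff_C_mul]
    rw [hexp]
    refine sub_mem ?_ (mul_mem (Subring.subset_closure (Or.inl rfl))
      (Subring.subset_closure (Or.inr ⟨k, rfl⟩)))
    rcases k with _ | k
    · rw [mul_coeff_zero, coeff_X_zero, zero_mul]
      exact zero_mem _
    · rw [coeff_X_mul]
      exact Subring.subset_closure (Or.inr ⟨k, rfl⟩)

end KroneckerAux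

section Bridge

variable {K : Type v} [CommRing K]

lemma integralOver_of_isIntegralElem (A : Subring K) {z : K}
    (h : A.subtype.IsIntegralElem z) : IntegralOver A z := by
  obtain ⟨P, hP, hev⟩ := h
  refine ⟨P.map A.subtype, hP.map _, fun n => ?_, ?_⟩
  · rw [Polynomial.coeff_map]
    exact (P.coeff n).2
  · rw [Polynomial.eval_map]
    exact hev

lemma integralOver_zero (A : Subring K) : IntegralOver A (0 : K) := by
  refine ⟨Polynomial.X, Polynomial.monic_X, fun n => ?_, by simp⟩
  rw [Polynomial.coeff_X]
  split <;> [exact A.one_mem; exact A.zero_mem]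

end Bridge

/-- Let `L/K` be an extension of `G`-graded fields (an injective
graded homomorphism `φ : K → L`), `A` a graded subring of `K` that is integrally
closed in `K` in the graded sense, and `x ∈ L^×` a homogeneous element of grading
`g` integral over `A`.  Then the minimal homogeneous polynomial `f` of `x` over `K`
(the monic homogeneous generator of the kernel of evaluation at `x`) has all its
coefficients in `A`, i.e. `f ∈ A[g⁻¹T] ⊆ K[g⁻¹T]`. -/
theorem minimal_homogeneous_polynomial_coeff_mem
    {G : Type u} [CommGroup G] {K L : Type v} [CommRing K] [CommRing L]
    (𝒜 : GradedStr G K) (hKf : 𝒜.IsGradedField)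
    (ℬ : GradedStr G L) (hLf : ℬ.IsGradedField)
    (φ : K →+* L) (hφinj : Function.Injective φ)
    (hφgr : ∀ g : G, ∀ a ∈ 𝒜.deg g, φ a ∈ ℬ.deg g)
    (A : Subring K) (hAgr : 𝒜.IsGradedSubring A)
    (hAic : ∀ z : K, (∀ g, IntegralOver A (𝒜.comp z g)) → z ∈ A)
    (x : L) (g : G) (hx : x ∈ ℬ.deg g) (hx0 : x ≠ 0)
    (hxint : ∃ p : Polynomial K, p.Monic ∧ (∀ n, p.coeff n ∈ A) ∧
      Polynomial.eval x (p.map φ) = 0)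
    (f : Polynomial K) (hfmonic : f.Monic) (hfhom : 𝒜.IsHomogPoly g f)
    (hfmin : ∀ p : Polynomial K, Polynomial.eval x (p.map φ) = 0 ↔ f ∣ p) :
    ∀ n, f.coeff n ∈ A := by
  intro n
  obtain ⟨p, hpmon, hpA, hpev⟩ := hxint
  obtain ⟨q, hpq⟩ := (hfmin p).mp hpev
  have hKnt : Nontrivial K := hKf.1
  have hq : q.Monic := hfmonic.of_mul_monic_left (hpq ▸ hpmon)
  have hpco : ∀ k, A.subtype.IsIntegralElem (p.coeff k) := fun k =>
    ⟨Polynomial.X - Polynomial.C ⟨p.coeff k, hpA k⟩, Polynomial.monic_X_sub_C _, by simp⟩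
  have hfco : ∀ k, A.subtype.IsIntegralElem (f.coeff k) :=
    kronecker_coeff_integral f.natDegree A.subtype f q hfmonic hq rfl
      (by rw [← hpq]; exact hpco)
  obtain ⟨h, hh⟩ := hfhom
  have hmem : f.coeff n ∈ 𝒜.deg (h * (g ^ n)⁻¹) := hh n
  apply hAic
  intro g'
  by_cases hg' : g' = h * (g ^ n)⁻¹
  · rw [hg', 𝒜.comp_of_mem hmem]
    exact integralOver_of_isIntegralElem A (hfco n)
  · rw [𝒜.comp_of_mem_ne hmem hg']
    exact integralOver_zero A
end

section
/- Let R be a commutative ring, M a projective R-module, N an R-module, and {N_i} a set of R-submodules of N. Then inside N ⊗_R M, the image of (∩_i N_i) ⊗_R M equals the intersection of the images of the maps N_i ⊗_R M → N ⊗_R M. -/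
/-!
Tensoring with a free module `κ →₀ R` identifies `N ⊗ (κ →₀ R)` with `κ →₀ N`, and the image of
`N' ⊗ (κ →₀ R)` with the finitely supported functions taking values in `N'`; membership is thus
checked coordinatewise, which commutes with arbitrary intersections. A projective `M` is a
retract of a free module, and `x ∈ N ⊗ M` lies in the image of `N' ⊗ M` exactly when its image
in `N ⊗ (M →₀ R)` lies in the image of `N' ⊗ (M →₀ R)`.
-/

open TensorProduct LinearMap

section

variable {R N P M M' : Type*} [CommRing R] [AddCommGroup N] [Module R N]
  [AddCommGroup P] [Module R P] [AddCommGroup M] [Module R M] [AddCommGroup M'] [Module R M']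

theorem Finsupp.submodule_iInf {α ι : Type*} (S : ι → α → Submodule R M) :
    Finsupp.submodule (fun a ↦ ⨅ i, S i a) = ⨅ i, Finsupp.submodule (S i) := by
  ext x
  simp only [Finsupp.mem_submodule_iff, Submodule.mem_iInf]
  exact forall_comm

theorem LinearMap.lTensor_rTensor_comm (f : P →ₗ[R] N) (g : M →ₗ[R] M') (x : P ⊗[R] M) :
    g.lTensor N (f.rTensor M x) = f.rTensor M' (g.lTensor P x) := by
  rw [← comp_apply, lTensor_comp_rTensor, ← rTensor_comp_lTensor, comp_apply]

theorem LinearMap.range_rTensor_eq_comap_of_comp_eq_id (f : P →ₗ[R] N) (s : M →ₗ[R] M')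
    (r : M' →ₗ[R] M) (hrs : r ∘ₗ s = LinearMap.id) :
    range (f.rTensor M) = (range (f.rTensor M')).comap (s.lTensor N) := by
  ext x
  constructor
  · rintro ⟨y, rfl⟩
    exact ⟨s.lTensor P y, (lTensor_rTensor_comm f s y).symm⟩
  · rintro ⟨y, hy⟩
    refine ⟨r.lTensor P y, ?_⟩
    rw [← lTensor_rTensor_comm, hy, ← comp_apply, ← lTensor_comp, hrs, lTensor_id, id_apply]

theorem TensorProduct.finsuppScalarRight_comp_rTensor {κ : Type*} [DecidableEq κ]
    (f : P →ₗ[R] N) :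
    (finsuppScalarRight R R N κ).toLinearMap ∘ₗ f.rTensor (κ →₀ R)
      = Finsupp.mapRange.linearMap f ∘ₗ (finsuppScalarRight R R P κ).toLinearMap := by
  ext p i j
  simp

theorem Submodule.range_rTensor_subtype_finsupp (N' : Submodule R N) (κ : Type*)
    [DecidableEq κ] :
    range (N'.subtype.rTensor (κ →₀ R))
      = (Finsupp.submodule fun _ ↦ N').comap (finsuppScalarRight R R N κ).toLinearMap := by
  rw [← Submodule.comap_map_eq_of_injective (finsuppScalarRight R R N κ).injective
    (range (N'.subtype.rTensor (κ →₀ R))), ← range_comp, finsuppScalarRight_comp_rTensor,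
    range_comp_of_range_eq_top _ (LinearEquiv.range _),
    Finsupp.range_mapRange_linearMap _ N'.ker_subtype, N'.range_subtype]

theorem Submodule.range_rTensor_iInf_subtype_finsupp {ι : Type*} (Ni : ι → Submodule R N)
    (κ : Type*) [DecidableEq κ] :
    range ((⨅ i, Ni i).subtype.rTensor (κ →₀ R))
      = ⨅ i, range ((Ni i).subtype.rTensor (κ →₀ R)) := by
  simp_rw [range_rTensor_subtype_finsupp, ← Submodule.comap_iInf, Finsupp.submodule_iInf]
end

/-- Let `R` be a commutative ring, `M` a projective `R`-module, `N` an
`R`-module, and `{N_i}` a set of `R`-submodules of `N`.  Inside `N ⊗_R M`, the image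
of `(⋂ i, N_i) ⊗_R M` equals the intersection of the images of the canonical maps
`N_i ⊗_R M → N ⊗_R M`. -/
theorem image_inter_tensor_eq_inter_image
    {R M N : Type*} [CommRing R] [AddCommGroup M] [Module R M]
    [AddCommGroup N] [Module R N]
    (hM : Module.Projective R M) {ι : Type*} (Ni : ι → Submodule R N) :
    LinearMap.range
        (TensorProduct.map (Submodule.subtype (⨅ i, Ni i)) (LinearMap.id : M →ₗ[R] M))
      = ⨅ i, LinearMap.range
          (TensorProduct.map (Submodule.subtype (Ni i)) (LinearMap.id : M →ₗ[R] M)) := by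
  classical
  obtain ⟨s, hs⟩ := hM.out
  have hrs : Finsupp.linearCombination R id ∘ₗ s = LinearMap.id := LinearMap.ext hs
  change range ((⨅ i, Ni i).subtype.rTensor M) = ⨅ i, range ((Ni i).subtype.rTensor M)
  simp_rw [range_rTensor_eq_comap_of_comp_eq_id _ s _ hrs,
    Submodule.range_rTensor_iInf_subtype_finsupp, Submodule.comap_iInf]
end

section
/- Let O be a graded valuation ring (for a commutative grading group G) and M a graded O-module that is torsion-free in the graded sense, meaning that for each nonzero homogeneous a ∈ O, multiplication by a is injective on M. Then M is a flat O-module, and if moreover M is finitely generated then M is free with a homogeneous basis. -/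
universe u v

/-- A `G`-graded module structure over a `G`-graded ring: graded pieces, compatibility
of scalar multiplication with the gradings, and an internal direct sum decomposition
recorded by the homogeneous-component function. -/
structure GradedModStr {G : Type u} [CommGroup G] {O : Type v} [CommRing O]
    (𝒪 : GradedStr G O) (M : Type v) [AddCommGroup M] [Module O M] where
  deg : G → AddSubgroup M
  smul_mem : ∀ {g h : G} {a : O} {m : M}, a ∈ 𝒪.deg g → m ∈ deg h → a • m ∈ deg (g * h)
  comp : M → G → M
  comp_mem : ∀ m g, comp m g ∈ deg g
  comp_add : ∀ m m' g, comp (m + m') g = comp m g + comp m' g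
  comp_of_mem : ∀ {m : M} {g : G}, m ∈ deg g → comp m g = m
  comp_of_mem_ne : ∀ {m : M} {g g' : G}, m ∈ deg g → g' ≠ g → comp m g' = 0
  finite_support : ∀ m : M, (Function.support (comp m)).Finite
  sum_comp : ∀ m : M, ∑ᶠ g, comp m g = m

/-! Every element is a finite sum of homogeneous components, so everything reduces to finite
sets `T` of homogeneous elements. If `T` is linearly dependent, a homogeneous component of a
relation is a relation with homogeneous coefficients; by the valuation property one of its
nonzero coefficients divides all the others, and since it acts injectively on `M` it can be
cancelled, which writes the corresponding element of `T` in terms of the rest. Hence `T`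
contains a linearly independent subset with the same span. Thus every finitely generated
submodule lies in a free one, which gives flatness by the equational criterion, and a finitely
generated `M` has a homogeneous basis. -/

theorem Module.Flat.of_forall_fg_le_flat {R M : Type*} [CommRing R] [AddCommGroup M] [Module R M]
    (h : ∀ N : Submodule R M, N.FG → ∃ N' : Submodule R M, N ≤ N' ∧ Module.Flat R N') :
    Module.Flat R M := by
  refine Module.Flat.of_forall_isTrivialRelation fun {l f x} hfx => ?_
  obtain ⟨N, hxN, hN⟩ := h _ (Submodule.fg_span (Set.finite_range x))
  let x' : Fin l → N := fun i => ⟨x i, hxN (Submodule.subset_span (Set.mem_range_self i))⟩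
  have hfx' : ∑ i, f i • x' i = 0 := Subtype.ext (by simpa [x'] using hfx)
  obtain ⟨k, a, y, hxy, hfa⟩ := Module.Flat.isTrivialRelation_of_sum_smul_eq_zero hfx'
  exact ⟨k, a, fun j => y j, fun i => by simpa [x'] using congrArg Subtype.val (hxy i), hfa⟩

theorem Submodule.mem_span_erase_of_sum_smul_eq_zero {R M : Type*} [CommRing R] [AddCommGroup M]
    [Module R M] [DecidableEq M] {T : Finset M} {c : M → R} (hrel : ∑ x ∈ T, c x • x = 0)
    {x₀ : M} (hx₀ : x₀ ∈ T) (hdvd : ∀ x ∈ T, c x₀ ∣ c x)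
    (hreg : Function.Injective (fun m : M => c x₀ • m)) :
    x₀ ∈ Submodule.span R (T.erase x₀ : Set M) := by
  open Pointwise in
  have hrest : ∑ x ∈ T.erase x₀, c x • x ∈ c x₀ • Submodule.span R (T.erase x₀ : Set M) := by
    refine Submodule.sum_mem _ fun x hx => ?_
    obtain ⟨e, he⟩ := hdvd x (Finset.mem_of_mem_erase hx)
    rw [he, mul_smul]
    exact Submodule.smul_mem_pointwise_smul _ _ _
      (Submodule.smul_mem _ _ (Submodule.subset_span hx))
  obtain ⟨y, hy, hcy⟩ := (Submodule.mem_smul_pointwise_iff_exists _ _ _).1 hrest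
  have hx₀y : x₀ + y = 0 := hreg (by
    simp only [smul_add, smul_zero, hcy]
    rwa [Finset.add_sum_erase T (fun x => c x • x) hx₀])
  have hny : -y ∈ Submodule.span R (T.erase x₀ : Set M) := neg_mem hy
  rwa [← eq_neg_of_add_eq_zero_left hx₀y] at hny

namespace GradedStr

variable {G : Type u} [CommGroup G] {A : Type v} [CommRing A] (𝒜 : GradedStr G A)

theorem exists_comp_ne_zero {a : A} (ha : a ≠ 0) : ∃ g, 𝒜.comp a g ≠ 0 := by
  by_contra! h
  exact ha (by rw [← 𝒜.sum_comp a]; simp [h])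

theorem exists_dvd_forall_of_dvd_total
    (hval : ∀ a b : A, 𝒜.IsHomog a → 𝒜.IsHomog b → a ≠ 0 → b ≠ 0 → a ∣ b ∨ b ∣ a)
    {ι : Type*} {s : Finset ι} {c : ι → A} (hc : ∀ i ∈ s, 𝒜.IsHomog (c i))
    (hs : ∃ i ∈ s, c i ≠ 0) : ∃ i ∈ s, c i ≠ 0 ∧ ∀ j ∈ s, c i ∣ c j := by
  classical
  obtain ⟨i, hi, hmin⟩ := (s.filter (c · ≠ 0)).exists_minimalFor (fun j => Associates.mk (c j))
    (by simpa [Finset.filter_nonempty_iff] using hs)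
  rw [Finset.mem_filter] at hi
  refine ⟨i, hi.1, hi.2, fun j hj => ?_⟩
  by_cases hcj : c j = 0
  · exact hcj ▸ dvd_zero _
  rcases hval _ _ (hc i hi.1) (hc j hj) hi.2 hcj with hij | hji
  · exact hij
  · exact Associates.mk_le_mk_iff_dvd.1
      (hmin (Finset.mem_filter.2 ⟨hj, hcj⟩) (Associates.mk_le_mk_iff_dvd.2 hji))

end GradedStr

namespace GradedModStr

variable {G : Type u} [CommGroup G] {O : Type v} [CommRing O] {𝒪 : GradedStr G O}
  {M : Type v} [AddCommGroup M] [Module O M] (ℳ : GradedModStr 𝒪 M)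

def IsHomog (m : M) : Prop := ∃ g, m ∈ ℳ.deg g

def compAddHom (h : G) : M →+ M where
  toFun m := ℳ.comp m h
  map_zero' := by simpa using ℳ.comp_add 0 0 h
  map_add' m m' := ℳ.comp_add m m' h

theorem comp_smul_of_mem {a : O} {m : M} {g : G} (hm : m ∈ ℳ.deg g) (h : G) :
    ℳ.comp (a • m) h = 𝒪.comp a (h * g⁻¹) • m := by
  have hsupp : (Function.support fun g' => 𝒪.comp a g' • m).Finite :=
    (𝒪.finite_support a).subset (Function.support_smul_subset_left _ _)
  have hsplit : a • m = ∑ᶠ g', 𝒪.comp a g' • m := by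
    conv_lhs => rw [← 𝒪.sum_comp a]
    exact finsum_smul' (𝒪.finite_support a) m
  rw [hsplit]
  change ℳ.compAddHom h _ = _
  rw [(ℳ.compAddHom h).map_finsum hsupp, finsum_eq_single _ (h * g⁻¹)]
  · exact ℳ.comp_of_mem (by simpa using ℳ.smul_mem (𝒪.comp_mem a (h * g⁻¹)) hm)
  · intro g' hg'
    exact ℳ.comp_of_mem_ne (ℳ.smul_mem (𝒪.comp_mem a g') hm) (by rintro rfl; simp at hg')

theorem exists_homog_relation {T : Finset M} (hT : ∀ x ∈ T, ℳ.IsHomog x) {l : M → O}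
    (hrel : ∑ x ∈ T, l x • x = 0) {x₀ : M} (hl : l x₀ ≠ 0) :
    ∃ c : M → O, (∀ x, 𝒪.IsHomog (c x)) ∧ c x₀ ≠ 0 ∧ ∑ x ∈ T, c x • x = 0 := by
  choose! d hd using hT
  obtain ⟨g, hg⟩ := 𝒪.exists_comp_ne_zero hl
  -- the component of the relation in degree `g * d x₀`
  refine ⟨fun x => 𝒪.comp (l x) (g * d x₀ * (d x)⁻¹), fun x => ⟨_, 𝒪.comp_mem _ _⟩,
    by simpa using hg, ?_⟩
  have hcomp := congrArg (ℳ.compAddHom (g * d x₀)) hrel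
  rw [map_sum, map_zero] at hcomp
  rw [← hcomp]
  exact Finset.sum_congr rfl fun x hx => (ℳ.comp_smul_of_mem (hd x hx) _).symm

theorem exists_linearIndepOn_subset_span_eq
    (hval : ∀ a b : O, 𝒪.IsHomog a → 𝒪.IsHomog b → a ≠ 0 → b ≠ 0 → a ∣ b ∨ b ∣ a)
    (htf : ∀ a : O, 𝒪.IsHomog a → a ≠ 0 → Function.Injective (fun m : M => a • m))
    (T : Finset M) (hT : ∀ x ∈ T, ℳ.IsHomog x) :
    ∃ T' ⊆ T, LinearIndepOn O id (T' : Set M) ∧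
      Submodule.span O (T' : Set M) = Submodule.span O (T : Set M) := by
  classical
  induction T using Finset.strongInduction with
  | H T ih =>
  by_cases hli : LinearIndepOn O id (T : Set M)
  · exact ⟨T, subset_rfl, hli, rfl⟩
  obtain ⟨l, hrel, x, hx, hlx⟩ := not_linearIndepOn_finset_iff.1 hli
  obtain ⟨c, hc, hcx, hcrel⟩ := ℳ.exists_homog_relation hT hrel hlx
  obtain ⟨x₁, hx₁, hcx₁, hdvd⟩ :=
    𝒪.exists_dvd_forall_of_dvd_total hval (fun x _ => hc x) ⟨x, hx, hcx⟩
  have hspan : Submodule.span O (T.erase x₁ : Set M) = Submodule.span O (T : Set M) := by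
    conv_rhs => rw [← Finset.insert_erase hx₁, Finset.coe_insert]
    exact (Submodule.span_insert_eq_span (Submodule.mem_span_erase_of_sum_smul_eq_zero hcrel hx₁
      hdvd (htf _ (hc x₁) hcx₁))).symm
  obtain ⟨T', hT', hli', hspan'⟩ := ih _ (Finset.erase_ssubset hx₁)
    fun y hy => hT y (Finset.mem_of_mem_erase hy)
  exact ⟨T', hT'.trans (Finset.erase_subset _ _), hli', hspan'.trans hspan⟩

noncomputable def components [DecidableEq M] (m : M) : Finset M :=
  (ℳ.finite_support m).toFinset.image (ℳ.comp m)

theorem isHomog_of_mem_components [DecidableEq M] {m x : M} (hx : x ∈ ℳ.components m) :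
    ℳ.IsHomog x := by
  obtain ⟨g, -, rfl⟩ := Finset.mem_image.1 hx
  exact ⟨g, ℳ.comp_mem m g⟩

theorem mem_span_components [DecidableEq M] (m : M) :
    m ∈ Submodule.span O (ℳ.components m : Set M) := by
  have hsum : ∑ g ∈ (ℳ.finite_support m).toFinset, ℳ.comp m g ∈
      Submodule.span O (ℳ.components m : Set M) :=
    Submodule.sum_mem _ fun g hg => Submodule.subset_span (Finset.mem_image_of_mem _ hg)
  rwa [← finsum_eq_sum _ (ℳ.finite_support m), ℳ.sum_comp] at hsum

theorem exists_isHomog_linearIndepOn_le_span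
    (hval : ∀ a b : O, 𝒪.IsHomog a → 𝒪.IsHomog b → a ≠ 0 → b ≠ 0 → a ∣ b ∨ b ∣ a)
    (htf : ∀ a : O, 𝒪.IsHomog a → a ≠ 0 → Function.Injective (fun m : M => a • m))
    (s : Finset M) :
    ∃ T : Finset M, (∀ x ∈ T, ℳ.IsHomog x) ∧ LinearIndepOn O id (T : Set M) ∧
      Submodule.span O (s : Set M) ≤ Submodule.span O (T : Set M) := by
  classical
  have hhom : ∀ x ∈ s.biUnion ℳ.components, ℳ.IsHomog x := fun x hx => by
    obtain ⟨m, -, hx⟩ := Finset.mem_biUnion.1 hx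
    exact ℳ.isHomog_of_mem_components hx
  obtain ⟨T, hT, hli, hspan⟩ := ℳ.exists_linearIndepOn_subset_span_eq hval htf _ hhom
  refine ⟨T, fun x hx => hhom x (hT hx), hli, ?_⟩
  rw [hspan, Submodule.span_le]
  intro m hm
  exact Submodule.span_mono (Finset.coe_subset.2 (Finset.subset_biUnion_of_mem _ hm))
    (ℳ.mem_span_components m)

theorem flat (ℳ : GradedModStr 𝒪 M)
    (hval : ∀ a b : O, 𝒪.IsHomog a → 𝒪.IsHomog b → a ≠ 0 → b ≠ 0 → a ∣ b ∨ b ∣ a)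
    (htf : ∀ a : O, 𝒪.IsHomog a → a ≠ 0 → Function.Injective (fun m : M => a • m)) :
    Module.Flat O M := by
  refine Module.Flat.of_forall_fg_le_flat fun N ⟨s, hs⟩ => ?_
  obtain ⟨T, -, hli, hle⟩ := ℳ.exists_isHomog_linearIndepOn_le_span hval htf s
  have := Module.Free.of_basis (Module.Basis.span hli)
  refine ⟨Submodule.span O (Set.range fun x : (T : Set M) => id (x : M)), ?_, inferInstance⟩
  simpa [← hs] using hle

theorem exists_basis_isHomog [Module.Finite O M]
    (hval : ∀ a b : O, 𝒪.IsHomog a → 𝒪.IsHomog b → a ≠ 0 → b ≠ 0 → a ∣ b ∨ b ∣ a)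
    (htf : ∀ a : O, 𝒪.IsHomog a → a ≠ 0 → Function.Injective (fun m : M => a • m)) :
    ∃ (n : ℕ) (b : Module.Basis (Fin n) O M), ∀ i, ℳ.IsHomog (b i) := by
  obtain ⟨s, hs⟩ := Module.Finite.fg_top (R := O) (M := M)
  obtain ⟨T, hT, hli, hle⟩ := ℳ.exists_isHomog_linearIndepOn_le_span hval htf s
  let b := Module.Basis.mk hli (by simpa [hs] using hle)
  exact ⟨_, b.reindex (Fintype.equivFin _), fun i => by simpa [b] using hT _ (Subtype.mem _)⟩

end GradedModStr

theorem graded_torsionfree_flat_and_free_general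
    {G : Type u} [CommGroup G] {O : Type v} [CommRing O]
    (𝒪 : GradedStr G O)
    (hval : ∀ a b : O, 𝒪.IsHomog a → 𝒪.IsHomog b → a ≠ 0 → b ≠ 0 → a ∣ b ∨ b ∣ a)
    {M : Type v} [AddCommGroup M] [Module O M] (ℳ : GradedModStr 𝒪 M)
    (htf : ∀ a : O, 𝒪.IsHomog a → a ≠ 0 →
      Function.Injective (fun m : M => a • m)) :
    Module.Flat O M ∧
      (Module.Finite O M →
        ∃ (n : ℕ) (b : Module.Basis (Fin n) O M), ∀ i, ∃ g, b i ∈ ℳ.deg g) :=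
  ⟨ℳ.flat hval htf, fun _ => ℳ.exists_basis_isHomog hval htf⟩

/-- Let `O` be a graded valuation ring (a graded domain in which, of
any two nonzero homogeneous elements, one divides the other -- equivalently, for every
nonzero homogeneous `f` of `Frac_G(O)`, `f ∈ O` or `f⁻¹ ∈ O`), and let `M` be a graded
`O`-module that is torsion-free in the graded sense.  Then `M` is flat over `O`, and
if `M` is finitely generated it is free with a homogeneous basis. -/
theorem graded_torsionfree_flat_and_free
    {G : Type u} [CommGroup G] {O : Type v} [CommRing O]
    (𝒪 : GradedStr G O)
    (hdom : Nontrivial O ∧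
      ∀ a : O, 𝒪.IsHomog a → a ≠ 0 → ∀ b : O, a * b = 0 → b = 0)
    (hval : ∀ a b : O, 𝒪.IsHomog a → 𝒪.IsHomog b → a ≠ 0 → b ≠ 0 → a ∣ b ∨ b ∣ a)
    {M : Type v} [AddCommGroup M] [Module O M] (ℳ : GradedModStr 𝒪 M)
    (htf : ∀ a : O, 𝒪.IsHomog a → a ≠ 0 →
      Function.Injective (fun m : M => a • m)) :
    Module.Flat O M ∧
      (Module.Finite O M →
        ∃ (n : ℕ) (b : Module.Basis (Fin n) O M), ∀ i, ∃ g, b i ∈ ℳ.deg g) :=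
  graded_torsionfree_flat_and_free_general 𝒪 hval ℳ htf
end
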